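/- In the Bussgang decomposition of hard clipping, the distortion noise variance δ_d² = E[(clip_B(X) − μX)²] with μ = erf(B/(σ√2)) satisfies δ_d² = E[clip_B(X)²] − μ² σ², which equals (σ² − B²)erf(B/(σ√2)) + B² − σB√(2/π)e^{−B²/(2σ²)} − σ² erf(B/(σ√2))². -/

import Mathlib

open MeasureTheory Real intervalIntegral

/-- The Gauss error function. -/
noncomputable def erf (x : ℝ) : ℝ :=
  (2 / Real.sqrt π) * ∫ t in (0 : ℝ)..x, Real.exp (-t ^ 2)

/-- The hard clipping nonlinearity at level `B`. -/
noncomputable def clip (B x : ℝ) : ℝ := max (-B) (min B x)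

section Aux

open Set Filter

lemma gauss_tendsto {a : ℝ} (ha : 0 < a) :
    Tendsto (fun x : ℝ => Real.exp (-a * x ^ 2)) atTop (nhds 0) := by
  apply Real.tendsto_exp_atBot.comp
  rw [show (fun x : ℝ => -a * x ^ 2) = fun x : ℝ => (-a) * x ^ 2 by norm_num]
  rw [tendsto_const_mul_atBot_of_neg (by linarith)]
  exact tendsto_pow_atTop two_ne_zero

lemma gauss_tendsto_one {a : ℝ} (ha : 0 < a) :
    Tendsto (fun x : ℝ => x * Real.exp (-a * x ^ 2)) atTop (nhds 0) := by
  have h := (rpow_mul_exp_neg_mul_sq_isLittleO_exp_neg ha 1).tendsto_zero_of_tendsto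
    (y := (0:ℝ)) ?_
  · refine h.congr' ?_
    filter_upwards [Ioi_mem_atTop (0:ℝ)] with x hx
    rw [Real.rpow_one]
  · apply Real.tendsto_exp_atBot.comp
    rw [show (HMul.hMul (-(1/2):ℝ)) = (fun x : ℝ => (-(1/2):ℝ) * x) from rfl,
      tendsto_const_mul_atBot_of_neg (by norm_num : (-(1/2):ℝ) < 0)]
    exact tendsto_id

lemma gauss1_Ioi {a : ℝ} (ha : 0 < a) (b : ℝ) :
    ∫ x in Ioi b, x * Real.exp (-a * x ^ 2) = Real.exp (-a * b ^ 2) / (2 * a) := by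
  have hd : ∀ x ∈ Ici b, HasDerivAt (fun x : ℝ => -Real.exp (-a * x ^ 2) / (2 * a))
      (x * Real.exp (-a * x ^ 2)) x := by
    intro x _
    have h1 : HasDerivAt (fun x : ℝ => -a * x ^ 2) (-a * (2 * x)) x := by
      simpa using (hasDerivAt_pow 2 x).const_mul (-a)
    have h2 : HasDerivAt (fun x : ℝ => -Real.exp (-a * x ^ 2) / (2 * a))
        (-(Real.exp (-a * x ^ 2) * (-a * (2 * x))) / (2 * a)) x :=
      (h1.exp).neg.div_const (2 * a)
    convert h2 using 1
    field_simp
  rw [MeasureTheory.integral_Ioi_of_hasDerivAt_of_tendsto' hd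
      (integrable_mul_exp_neg_mul_sq ha).integrableOn
      (by simpa using ((gauss_tendsto ha).neg.div_const (2 * a)))]
  field_simp
  ring

lemma integrable_sq_mul_exp {a : ℝ} (ha : 0 < a) :
    Integrable (fun x : ℝ => x ^ 2 * Real.exp (-a * x ^ 2)) := by
  have := integrable_rpow_mul_exp_neg_mul_sq ha (s := ((2:ℕ):ℝ)) (by norm_num)
  refine this.congr (Filter.Eventually.of_forall fun x => ?_)
  show x ^ ((2:ℕ):ℝ) * _ = _
  rw [Real.rpow_natCast]

lemma gauss2_Ioi {a : ℝ} (ha : 0 < a) (b : ℝ) :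
    ∫ x in Ioi b, x ^ 2 * Real.exp (-a * x ^ 2) =
      b * Real.exp (-a * b ^ 2) / (2 * a) + (∫ x in Ioi b, Real.exp (-a * x ^ 2)) / (2 * a) := by
  have hd : ∀ x ∈ Ici b, HasDerivAt (fun x : ℝ => -(x * Real.exp (-a * x ^ 2)) / (2 * a))
      (x ^ 2 * Real.exp (-a * x ^ 2) - Real.exp (-a * x ^ 2) / (2 * a)) x := by
    intro x _
    have h1 : HasDerivAt (fun x : ℝ => -a * x ^ 2) (-a * (2 * x)) x := by
      simpa using (hasDerivAt_pow 2 x).const_mul (-a)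
    have h2 : HasDerivAt (fun x : ℝ => -(x * Real.exp (-a * x ^ 2)) / (2 * a))
        (-(1 * Real.exp (-a * x ^ 2) + x * (Real.exp (-a * x ^ 2) * (-a * (2 * x)))) / (2 * a)) x :=
      ((hasDerivAt_id x).mul h1.exp).neg.div_const (2 * a)
    convert h2 using 1
    field_simp
    ring
  have hint : IntegrableOn (fun x : ℝ =>
      x ^ 2 * Real.exp (-a * x ^ 2) - Real.exp (-a * x ^ 2) / (2 * a)) (Ioi b) := by
    exact ((integrable_sq_mul_exp ha).sub ((integrable_exp_neg_mul_sq ha).div_const _)).integrableOn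
  have key := MeasureTheory.integral_Ioi_of_hasDerivAt_of_tendsto' hd hint
      (by simpa using ((gauss_tendsto_one ha).neg.div_const (2 * a)))
  rw [integral_sub (integrable_sq_mul_exp ha).integrableOn
      ((integrable_exp_neg_mul_sq ha).div_const _).integrableOn] at key
  rw [MeasureTheory.integral_div] at key
  have : ∫ x in Ioi b, x ^ 2 * Real.exp (-a * x ^ 2) =
      (∫ x in Ioi b, Real.exp (-a * x ^ 2)) / (2 * a) +
        (0 - -(b * Real.exp (-a * b ^ 2)) / (2 * a)) := by
    linarith [key]
  rw [this]; ring

lemma erf_integral {σ B : ℝ} (hσ : 0 < σ) :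
    ∫ x in (0:ℝ)..B, Real.exp (-(1 / (2 * σ ^ 2)) * x ^ 2) =
      (σ * Real.sqrt 2) * ((Real.sqrt π / 2) * erf (B / (σ * Real.sqrt 2))) := by
  have hq : (0:ℝ) < Real.sqrt 2 := Real.sqrt_pos.mpr (by norm_num)
  have hs : (0:ℝ) < σ * Real.sqrt 2 := by positivity
  have hsq : (σ * Real.sqrt 2) ^ 2 = 2 * σ ^ 2 := by
    rw [mul_pow, Real.sq_sqrt (by norm_num : (0:ℝ) ≤ 2)]; ring
  have h1 : ∀ x : ℝ, Real.exp (-(1 / (2 * σ ^ 2)) * x ^ 2) =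
      (fun t => Real.exp (-t ^ 2)) (x / (σ * Real.sqrt 2)) := by
    intro x
    simp only []
    congr 1
    rw [div_pow, hsq]
    field_simp
  simp_rw [h1]
  rw [intervalIntegral.integral_comp_div (fun t => Real.exp (-t ^ 2)) hs.ne']
  rw [erf]
  have hπ : (0:ℝ) < Real.sqrt π := Real.sqrt_pos.mpr Real.pi_pos
  field_simp
  ring

end Aux

/-- Distortion-noise variance of hard clipping in the Bussgang decomposition:
with `X ~ N(0,σ²)` and `μ = erf(B/(σ√2))`,
`δ_d² = E[(clip_B(X) − μX)²] = E[clip_B(X)²] − μ²σ²`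
`= (σ² − B²)erf(B/(σ√2)) + B² − σB√(2/π)e^{−B²/(2σ²)} − σ² erf(B/(σ√2))²`. -/
theorem clipping_distortion_variance (σ B : ℝ) (hσ : 0 < σ) (hB : 0 < B) :
    (∫ x : ℝ, (clip B x - erf (B / (σ * Real.sqrt 2)) * x) ^ 2 *
        ((1 / Real.sqrt (2 * π * σ ^ 2)) * Real.exp (-x ^ 2 / (2 * σ ^ 2)))) =
      (∫ x : ℝ, (clip B x) ^ 2 *
        ((1 / Real.sqrt (2 * π * σ ^ 2)) * Real.exp (-x ^ 2 / (2 * σ ^ 2)))) -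
        erf (B / (σ * Real.sqrt 2)) ^ 2 * σ ^ 2 ∧
    (∫ x : ℝ, (clip B x - erf (B / (σ * Real.sqrt 2)) * x) ^ 2 *
        ((1 / Real.sqrt (2 * π * σ ^ 2)) * Real.exp (-x ^ 2 / (2 * σ ^ 2)))) =
      (σ ^ 2 - B ^ 2) * erf (B / (σ * Real.sqrt 2)) + B ^ 2 -
        σ * B * Real.sqrt (2 / π) * Real.exp (-B ^ 2 / (2 * σ ^ 2)) -
        σ ^ 2 * erf (B / (σ * Real.sqrt 2)) ^ 2 := by
  classical
  open Set Filter in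
  have hπ := Real.pi_pos
  set μ := erf (B / (σ * Real.sqrt 2)) with hμ_def
  set a : ℝ := 1 / (2 * σ ^ 2) with ha_def
  have ha : 0 < a := by rw [ha_def]; positivity
  set c : ℝ := 1 / Real.sqrt (2 * π * σ ^ 2) with hc_def
  have hsqpos : (0:ℝ) < Real.sqrt (2 * π * σ ^ 2) := Real.sqrt_pos.mpr (by positivity)
  have hcpos : 0 < c := by rw [hc_def]; positivity
  have hexp : ∀ x : ℝ, Real.exp (-x ^ 2 / (2 * σ ^ 2)) = Real.exp (-a * x ^ 2) := by
    intro x; congr 1; rw [ha_def]; ring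
  simp only [hexp]
  -- basic integrability
  have hIe : Integrable (fun x : ℝ => Real.exp (-a * x ^ 2)) := integrable_exp_neg_mul_sq ha
  have hIxe : Integrable (fun x : ℝ => x * Real.exp (-a * x ^ 2)) :=
    integrable_mul_exp_neg_mul_sq ha
  have hIx2e := integrable_sq_mul_exp ha
  have hclipc : Continuous (clip B) := by
    unfold clip; exact continuous_const.max (continuous_const.min continuous_id)
  have hec : Continuous (fun x : ℝ => c * Real.exp (-a * x ^ 2)) := by fun_prop
  have hclip_le : ∀ x, |clip B x| ≤ B := by
    intro x
    rw [abs_le]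
    exact ⟨le_max_left _ _, max_le (by linarith) (min_le_left _ _)⟩
  have hIclip2 : Integrable (fun x : ℝ => (clip B x) ^ 2 * (c * Real.exp (-a * x ^ 2))) := by
    refine ((hIe.const_mul c).const_mul (B ^ 2)).mono'
      (((hclipc.pow 2).mul hec).aestronglyMeasurable) ?_
    refine Filter.Eventually.of_forall fun x => ?_
    have h1 : (clip B x) ^ 2 ≤ B ^ 2 := by
      have h := hclip_le x
      nlinarith [abs_nonneg (clip B x), sq_abs (clip B x)]
    have h2 : 0 ≤ c * Real.exp (-a * x ^ 2) := by positivity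
    rw [Real.norm_eq_abs, abs_mul, abs_of_nonneg h2, abs_of_nonneg (sq_nonneg _)]
    exact mul_le_mul_of_nonneg_right h1 h2
  have hIxclip : Integrable (fun x : ℝ => x * clip B x * (c * Real.exp (-a * x ^ 2))) := by
    refine ((hIxe.abs).const_mul (B * c)).mono'
      ((continuous_id.mul hclipc).mul hec).aestronglyMeasurable ?_
    refine Filter.Eventually.of_forall fun x => ?_
    have hE : (0:ℝ) < Real.exp (-a * x ^ 2) := Real.exp_pos _
    have h3 : |x * Real.exp (-a * x ^ 2)| = |x| * Real.exp (-a * x ^ 2) := by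
      rw [abs_mul, abs_of_pos hE]
    rw [Real.norm_eq_abs, abs_mul, abs_mul, abs_mul, abs_of_pos hE, abs_of_pos hcpos, h3]
    have h5 := hclip_le x
    have h4 : |x| * |clip B x| * (c * Real.exp (-a * x ^ 2)) ≤
        |x| * B * (c * Real.exp (-a * x ^ 2)) :=
      mul_le_mul_of_nonneg_right (mul_le_mul_of_nonneg_left h5 (abs_nonneg x)) (by positivity)
    refine h4.trans_eq ?_
    ring
  have hIx2 : Integrable (fun x : ℝ => x ^ 2 * (c * Real.exp (-a * x ^ 2))) := by
    refine (hIx2e.const_mul c).congr (Filter.Eventually.of_forall fun x => by ring)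
  -- splitting lemmas
  have hsplit : ∀ f : ℝ → ℝ, Integrable f →
      (∫ x, f x) = (∫ x in Iic (-B), f x) + ((∫ x in Ioc (-B) B, f x) + ∫ x in Ioi B, f x) := by
    intro f hf
    rw [← integral_Iic_add_Ioi hf.integrableOn hf.integrableOn]
    congr 1
    rw [← Set.Ioc_union_Ioi_eq_Ioi (by linarith : -B ≤ B),
      setIntegral_union (Set.Ioc_disjoint_Ioi le_rfl) measurableSet_Ioi
        hf.integrableOn hf.integrableOn]
  have hsplit0 : ∀ f : ℝ → ℝ, Integrable f →
      (∫ x in Ioi (0:ℝ), f x) = (∫ x in Ioc 0 B, f x) + ∫ x in Ioi B, f x := by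
    intro f hf
    rw [← Set.Ioc_union_Ioi_eq_Ioi hB.le,
      setIntegral_union (Set.Ioc_disjoint_Ioi le_rfl) measurableSet_Ioi
        hf.integrableOn hf.integrableOn]
  -- clip values on regions
  have hclip_left : ∀ x ∈ Iic (-B), clip B x = -B := by
    intro x hx
    simp only [Set.mem_Iic] at hx
    unfold clip
    rw [min_eq_right (by linarith), max_eq_left (by linarith)]
  have hclip_mid : ∀ x ∈ Ioc (-B) B, clip B x = x := by
    intro x hx
    obtain ⟨h1, h2⟩ := hx
    unfold clip
    rw [min_eq_right h2, max_eq_right h1.le]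
  have hclip_right : ∀ x ∈ Ioi B, clip B x = B := by
    intro x hx
    simp only [Set.mem_Ioi] at hx
    unfold clip
    rw [min_eq_left hx.le, max_eq_right (by linarith)]
  -- reflections
  have even_refl : ∀ k : ℝ, (∫ x in Iic (-B), k * (c * Real.exp (-a * x ^ 2))) =
      ∫ x in Ioi B, k * (c * Real.exp (-a * x ^ 2)) := by
    intro k
    have h := integral_comp_neg_Iic (-B) (fun x => k * (c * Real.exp (-a * x ^ 2)))
    simpa [neg_sq] using h
  have odd_refl : (∫ x in Iic (-B), x * (c * Real.exp (-a * x ^ 2))) =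
      -∫ x in Ioi B, x * (c * Real.exp (-a * x ^ 2)) := by
    have h := integral_comp_neg_Iic (-B) (fun x => x * (c * Real.exp (-a * x ^ 2)))
    simp only [neg_neg] at h
    rw [← h, ← MeasureTheory.integral_neg]
    congr 1
    funext x
    ring
  -- scalar values
  have hE0 : ∫ x in Ioi (0:ℝ), Real.exp (-a * x ^ 2) = Real.sqrt (π / a) / 2 :=
    integral_gaussian_Ioi a
  have h0B : ∫ x in Ioc (0:ℝ) B, Real.exp (-a * x ^ 2) =
      (σ * Real.sqrt 2) * ((Real.sqrt π / 2) * μ) := by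
    rw [← intervalIntegral.integral_of_le hB.le]
    rw [hμ_def, ha_def]
    exact erf_integral hσ
  have hEB : ∫ x in Ioi B, Real.exp (-a * x ^ 2) =
      Real.sqrt (π / a) / 2 - (σ * Real.sqrt 2) * ((Real.sqrt π / 2) * μ) := by
    have h := hsplit0 _ hIe
    rw [hE0, h0B] at h
    linarith
  have hP1 : ∫ x in Ioi B, x * Real.exp (-a * x ^ 2) = Real.exp (-a * B ^ 2) / (2 * a) :=
    gauss1_Ioi ha B
  have hP2 := gauss2_Ioi ha B
  have hQtot : ∫ x in Ioi (0:ℝ), x ^ 2 * Real.exp (-a * x ^ 2) =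
      (Real.sqrt (π / a) / 2) / (2 * a) := by
    have h := gauss2_Ioi ha 0
    rw [hE0] at h
    simpa using h
  have hQ2 : ∫ x in Ioc (0:ℝ) B, x ^ 2 * Real.exp (-a * x ^ 2) =
      (Real.sqrt (π / a) / 2) / (2 * a) -
        (B * Real.exp (-a * B ^ 2) / (2 * a) + (∫ x in Ioi B, Real.exp (-a * x ^ 2)) / (2 * a)) := by
    have h := hsplit0 _ hIx2e
    rw [hQtot, hP2] at h
    linarith
  -- middle interval of x^2 * density
  have hmid_even : (∫ x in Ioc (-B) B, x ^ 2 * (c * Real.exp (-a * x ^ 2))) =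
      2 * ∫ x in Ioc (0:ℝ) B, x ^ 2 * (c * Real.exp (-a * x ^ 2)) := by
    rw [← intervalIntegral.integral_of_le (by linarith : -B ≤ B),
      ← intervalIntegral.integral_of_le hB.le]
    rw [← intervalIntegral.integral_add_adjacent_intervals
      (a := -B) (b := 0) (c := B) hIx2.intervalIntegrable hIx2.intervalIntegrable]
    have h := intervalIntegral.integral_comp_neg (a := -B) (b := 0)
      (fun x => x ^ 2 * (c * Real.exp (-a * x ^ 2)))
    simp only [neg_sq, neg_zero, neg_neg] at h
    rw [h]
    ring
  have hmid : (∫ x in Ioc (-B) B, x ^ 2 * (c * Real.exp (-a * x ^ 2))) =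
      2 * (c * ∫ x in Ioc (0:ℝ) B, x ^ 2 * Real.exp (-a * x ^ 2)) := by
    rw [hmid_even]
    congr 1
    rw [← MeasureTheory.integral_const_mul]
    congr 1
    funext x
    ring
  -- pull constants out over Ioi B
  have hpull2 : (∫ x in Ioi B, x ^ 2 * (c * Real.exp (-a * x ^ 2))) =
      c * ∫ x in Ioi B, x ^ 2 * Real.exp (-a * x ^ 2) := by
    rw [← MeasureTheory.integral_const_mul]
    congr 1
    funext x
    ring
  have hpull1 : (∫ x in Ioi B, x * (c * Real.exp (-a * x ^ 2))) =
      c * ∫ x in Ioi B, x * Real.exp (-a * x ^ 2) := by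
    rw [← MeasureTheory.integral_const_mul]
    congr 1
    funext x
    ring
  -- algebraic facts about the constants
  have hq2 : (0:ℝ) < Real.sqrt 2 := Real.sqrt_pos.mpr (by norm_num)
  have hp2 : (0:ℝ) < Real.sqrt π := Real.sqrt_pos.mpr hπ
  have hqq : Real.sqrt 2 ^ 2 = 2 := Real.sq_sqrt (by norm_num)
  have hpp : Real.sqrt π ^ 2 = π := Real.sq_sqrt hπ.le
  have hsq2 : Real.sqrt (2 * π * σ ^ 2) = σ * (Real.sqrt 2 * Real.sqrt π) := by
    rw [show 2 * π * σ ^ 2 = σ ^ 2 * (2 * π) by ring, Real.sqrt_mul (sq_nonneg σ),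
      Real.sqrt_sq hσ.le, Real.sqrt_mul (by norm_num : (0:ℝ) ≤ 2)]
  have hcval : c = 1 / (σ * (Real.sqrt 2 * Real.sqrt π)) := by rw [hc_def, hsq2]
  have hSval : Real.sqrt (π / a) = σ * (Real.sqrt 2 * Real.sqrt π) := by
    rw [show π / a = 2 * π * σ ^ 2 by rw [ha_def]; field_simp, hsq2]
  have hqp2 : Real.sqrt (2 / π) = 2 / (Real.sqrt 2 * Real.sqrt π) := by
    rw [Real.sqrt_div (by norm_num : (0:ℝ) ≤ 2) π, div_eq_div_iff hp2.ne' (by positivity)]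
    rw [show Real.sqrt 2 * (Real.sqrt 2 * Real.sqrt π) = Real.sqrt 2 ^ 2 * Real.sqrt π by ring,
      hqq]
  have even_x2 : (∫ x in Iic (-B), x ^ 2 * (c * Real.exp (-a * x ^ 2))) =
      ∫ x in Ioi B, x ^ 2 * (c * Real.exp (-a * x ^ 2)) := by
    have h := integral_comp_neg_Iic (-B) (fun x => x ^ 2 * (c * Real.exp (-a * x ^ 2)))
    simpa [neg_neg, neg_sq] using h
  -- the three main integrals
  have F1 : (∫ x : ℝ, x ^ 2 * (c * Real.exp (-a * x ^ 2))) = σ ^ 2 := by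
    rw [hsplit _ hIx2, even_x2, hmid, hQ2, hpull2, hP2, hEB]
    rw [hSval, hcval, ha_def]
    field_simp
    ring
  have F2 : (∫ x : ℝ, x * clip B x * (c * Real.exp (-a * x ^ 2))) = μ * σ ^ 2 := by
    have r1 : (∫ x in Iic (-B), x * clip B x * (c * Real.exp (-a * x ^ 2))) =
        -B * ∫ x in Iic (-B), x * (c * Real.exp (-a * x ^ 2)) := by
      rw [← MeasureTheory.integral_const_mul]
      refine setIntegral_congr_fun measurableSet_Iic fun x hx => ?_
      rw [hclip_left x hx]; ring
    have r2 : (∫ x in Ioc (-B) B, x * clip B x * (c * Real.exp (-a * x ^ 2))) =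
        ∫ x in Ioc (-B) B, x ^ 2 * (c * Real.exp (-a * x ^ 2)) := by
      refine setIntegral_congr_fun measurableSet_Ioc fun x hx => ?_
      rw [hclip_mid x hx]; ring
    have r3 : (∫ x in Ioi B, x * clip B x * (c * Real.exp (-a * x ^ 2))) =
        B * ∫ x in Ioi B, x * (c * Real.exp (-a * x ^ 2)) := by
      rw [← MeasureTheory.integral_const_mul]
      refine setIntegral_congr_fun measurableSet_Ioi fun x hx => ?_
      rw [hclip_right x hx]; ring
    rw [hsplit _ hIxclip, r1, r2, r3, odd_refl, hmid, hQ2, hpull1, hP1, hEB]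
    rw [hSval, hcval, ha_def]
    field_simp
    ring
  have F3 : (∫ x : ℝ, (clip B x) ^ 2 * (c * Real.exp (-a * x ^ 2))) =
      (σ ^ 2 - B ^ 2) * μ + B ^ 2 - σ * B * Real.sqrt (2 / π) * Real.exp (-a * B ^ 2) := by
    have r1 : (∫ x in Iic (-B), (clip B x) ^ 2 * (c * Real.exp (-a * x ^ 2))) =
        ∫ x in Iic (-B), B ^ 2 * (c * Real.exp (-a * x ^ 2)) := by
      refine setIntegral_congr_fun measurableSet_Iic fun x hx => ?_
      rw [hclip_left x hx]; ring
    have r2 : (∫ x in Ioc (-B) B, (clip B x) ^ 2 * (c * Real.exp (-a * x ^ 2))) =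
        ∫ x in Ioc (-B) B, x ^ 2 * (c * Real.exp (-a * x ^ 2)) := by
      refine setIntegral_congr_fun measurableSet_Ioc fun x hx => ?_
      rw [hclip_mid x hx]
    have r3 : (∫ x in Ioi B, (clip B x) ^ 2 * (c * Real.exp (-a * x ^ 2))) =
        ∫ x in Ioi B, B ^ 2 * (c * Real.exp (-a * x ^ 2)) := by
      refine setIntegral_congr_fun measurableSet_Ioi fun x hx => ?_
      rw [hclip_right x hx]
    rw [hsplit _ hIclip2, r1, r2, r3, even_refl, hmid, hQ2,
      MeasureTheory.integral_const_mul, MeasureTheory.integral_const_mul, hEB]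
    rw [hSval, hcval, hqp2, ha_def]
    field_simp
    ring
  -- expansion
  have hexpand : (∫ x : ℝ, (clip B x - μ * x) ^ 2 * (c * Real.exp (-a * x ^ 2))) =
      (∫ x : ℝ, (clip B x) ^ 2 * (c * Real.exp (-a * x ^ 2))) -
        2 * μ * (∫ x : ℝ, x * clip B x * (c * Real.exp (-a * x ^ 2))) +
        μ ^ 2 * ∫ x : ℝ, x ^ 2 * (c * Real.exp (-a * x ^ 2)) := by
    have heq : (fun x : ℝ => (clip B x - μ * x) ^ 2 * (c * Real.exp (-a * x ^ 2))) =
        fun x : ℝ => ((clip B x) ^ 2 * (c * Real.exp (-a * x ^ 2)) -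
          2 * μ * (x * clip B x * (c * Real.exp (-a * x ^ 2)))) +
          μ ^ 2 * (x ^ 2 * (c * Real.exp (-a * x ^ 2))) := by
      funext x; ring
    have hsub : Integrable (fun x : ℝ => (clip B x) ^ 2 * (c * Real.exp (-a * x ^ 2)) -
        2 * μ * (x * clip B x * (c * Real.exp (-a * x ^ 2)))) :=
      hIclip2.sub (hIxclip.const_mul _)
    have hmu2 : Integrable (fun x : ℝ => μ ^ 2 * (x ^ 2 * (c * Real.exp (-a * x ^ 2)))) :=
      hIx2.const_mul _
    rw [heq, integral_add hsub hmu2,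
      integral_sub hIclip2 (hIxclip.const_mul _), MeasureTheory.integral_const_mul,
      MeasureTheory.integral_const_mul]
  constructor
  · rw [hexpand, F1, F2]
    ring
  · rw [hexpand, F1, F2, F3]
    ring
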